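/- arXiv:1907.07732 — 2 statements merged into one kernel-verified Lean document; each statement's English description precedes it below -/
import Mathlib

section
/- Let A be the N×N matrix with diagonal entries -α₁,...,-α_N (all αᵢ > 0), subdiagonal entries β₁,...,β_{N-1} (all βᵢ > 0), top-right corner entry -β_N (β_N > 0), and zeros elsewhere, where N > 2. If there exists a diagonal matrix D with positive diagonal entries such that DA + AᵀD is negative definite, then (β₁⋯β_N)/(α₁⋯α_N) < sec(π/N)^N. -/
/-!
If `D > 0` is diagonal and `DA + AᵀD` is negative definite, then any `u ≠ 0` with
`A u = z • diag(e) u`, where all `dᵢ eᵢ > 0`, has `Re z < 0`, because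
`u* (DA + AᵀD) u = 2 Re z ∑ dᵢ eᵢ |uᵢ|²`. For the cyclic matrix, every root of
`μ ^ N = -P`, `P = ∏ β / ∏ α`, yields such a vector with `e = α` and `z = μ - 1`, namely
`u_k = ∏_{j<k} β_j / (μ ^ k ∏_{j≤k} α_j)`. The root `μ = P^{1/N} e^{iπ/N}` then gives
`P^{1/N} cos (π / N) < 1`, that is `P < sec (π / N) ^ N`.
-/

open Matrix Real Finset

section Lyapunov

variable {ι : Type*} [Fintype ι]

theorem Matrix.PosDef.re_dotProduct_map_ofReal_pos {M : Matrix ι ι ℝ} (hM : M.PosDef)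
    {u : ι → ℂ} (hu : u ≠ 0) : 0 < (star u ⬝ᵥ (M.map (↑) *ᵥ u)).re := by
  set x : ι → ℝ := fun i => (u i).re
  set y : ι → ℝ := fun i => (u i).im
  have hsplit : (star u ⬝ᵥ (M.map (↑) *ᵥ u)).re = x ⬝ᵥ (M *ᵥ x) + y ⬝ᵥ (M *ᵥ y) := by
    simp only [dotProduct, mulVec, Complex.re_sum, mul_sum, ← sum_add_distrib]
    refine sum_congr rfl fun i _ => sum_congr rfl fun j _ => ?_
    simp [x, y, Complex.mul_re]
  have hxy : x ≠ 0 ∨ y ≠ 0 := by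
    by_contra! h
    exact hu (funext fun i => Complex.ext (congrFun h.1 i) (congrFun h.2 i))
  have hx := hM.posSemidef.dotProduct_mulVec_nonneg x
  have hy := hM.posSemidef.dotProduct_mulVec_nonneg y
  rw [hsplit]
  rcases hxy with h | h <;> have := hM.dotProduct_mulVec_pos h <;>
    simp only [star_trivial] at hx hy this <;> linarith

theorem re_star_dotProduct_add_conjTranspose_mulVec {𝕜 : Type*} [RCLike 𝕜] (X : Matrix ι ι 𝕜)
    (u : ι → 𝕜) :
    RCLike.re (star u ⬝ᵥ ((X + Xᴴ) *ᵥ u)) = 2 * RCLike.re (star u ⬝ᵥ (X *ᵥ u)) := by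
  have h : star u ⬝ᵥ (Xᴴ *ᵥ u) = star (star u ⬝ᵥ (X *ᵥ u)) := by
    rw [dotProduct_mulVec, ← star_mulVec, star_dotProduct]
  rw [add_mulVec, dotProduct_add, h, map_add, RCLike.star_def, RCLike.conj_re]
  ring

theorem re_neg_of_diagonal_lyapunov [DecidableEq ι] {A : Matrix ι ι ℝ} {d e : ι → ℝ}
    (hde : ∀ i, 0 < d i * e i) (hA : (-(diagonal d * A + Aᵀ * diagonal d)).PosDef)
    {u : ι → ℂ} (hu : u ≠ 0) {z : ℂ} (heig : A.map (↑) *ᵥ u = fun i => z * e i * u i) :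
    z.re < 0 := by
  set X : Matrix ι ι ℂ := (diagonal d * A).map (↑)
  have hmap : (-(diagonal d * A + Aᵀ * diagonal d)).map ((↑) : ℝ → ℂ) = -(X + Xᴴ) := by
    ext i j
    simp [X, mul_comm]
  have hX : star u ⬝ᵥ (X *ᵥ u) = z * ↑(∑ i, d i * e i * Complex.normSq (u i)) := by
    have hXd : X = diagonal (fun i => (d i : ℂ)) * A.map (↑) := by ext i j; simp [X]
    rw [hXd, ← mulVec_mulVec, heig]
    simp [dotProduct, mulVec_diagonal, mul_sum, Complex.normSq_eq_conj_mul_self]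
    refine sum_congr rfl fun i _ => ?_
    ring
  have hS : 0 < ∑ i, d i * e i * Complex.normSq (u i) := by
    obtain ⟨i, hi⟩ := Function.ne_iff.mp hu
    exact sum_pos' (fun j _ => mul_nonneg (hde j).le (Complex.normSq_nonneg _))
      ⟨i, mem_univ _, mul_pos (hde i) (Complex.normSq_pos.mpr hi)⟩
  have hpos := hA.re_dotProduct_map_ofReal_pos hu
  rw [hmap, neg_mulVec, dotProduct_neg, Complex.neg_re] at hpos
  have := re_star_dotProduct_add_conjTranspose_mulVec X u
  simp only [RCLike.re_to_complex, hX, Complex.re_mul_ofReal] at this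
  nlinarith

end Lyapunov

section Weight

variable {a b : ℕ → ℂ} {μ : ℂ}

noncomputable def cyclicWeight (a b : ℕ → ℂ) (μ : ℂ) (k : ℕ) : ℂ :=
  (∏ j ∈ range k, b j) / (μ ^ k * ∏ j ∈ range (k + 1), a j)

theorem cyclicWeight_succ (ha : ∀ j, a j ≠ 0) (hμ : μ ≠ 0) (k : ℕ) :
    μ * a (k + 1) * cyclicWeight a b μ (k + 1) = b k * cyclicWeight a b μ k := by
  have hprod : ∏ j ∈ range (k + 1), a j ≠ 0 := prod_ne_zero_iff.mpr fun j _ => ha j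
  have hk := ha (k + 1)
  rw [cyclicWeight, cyclicWeight, prod_range_succ _ k, prod_range_succ _ (k + 1), pow_succ]
  field_simp

theorem cyclicWeight_wrap (ha : ∀ j, a j ≠ 0) (hμ : μ ≠ 0) {n : ℕ}
    (hμn : μ ^ (n + 1) * ∏ j ∈ range (n + 1), a j = -∏ j ∈ range (n + 1), b j) :
    b n * cyclicWeight a b μ n = -(μ * a 0 * cyclicWeight a b μ 0) := by
  have hprod : ∏ j ∈ range (n + 1), a j ≠ 0 := prod_ne_zero_iff.mpr fun j _ => ha j
  have h0 := ha 0
  rw [prod_range_succ b] at hμn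
  simp only [cyclicWeight, prod_range_zero, zero_add, prod_range_one, pow_zero, one_mul]
  field_simp
  linear_combination hμn

end Weight

section Cyclic

open Fin.NatCast

variable {n : ℕ}

def cyclicMatrix (α β : Fin (n + 1) → ℝ) : Matrix (Fin (n + 1)) (Fin (n + 1)) ℝ :=
  Matrix.of fun i j =>
    if i = j then -α i
    else if i.val = j.val + 1 then β j
    else if i.val = 0 ∧ j.val = n then -β (Fin.last n)
    else 0

-- In `Fin (n + 1)`, `0 - 1` is the last index: the corner entry sits on the wrapped subdiagonal.
theorem cyclicMatrix_apply (hn : n ≠ 0) (α β : Fin (n + 1) → ℝ) (i j : Fin (n + 1)) :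
    cyclicMatrix α β i j =
      (if j = i then -α i else 0) + (if j = i - 1 then (if i = 0 then -β j else β j) else 0) := by
  have hsub := Fin.coe_sub_one i
  simp only [cyclicMatrix, of_apply, Fin.ext_iff, Fin.val_zero] at hsub ⊢
  split_ifs at hsub ⊢ <;> first | omega | ring1 |
    (obtain rfl : j = Fin.last n := Fin.ext (by simp only [Fin.val_last]; omega); ring1)

theorem cyclicMatrix_map_mulVec (hn : n ≠ 0) (α β : Fin (n + 1) → ℝ) (u : Fin (n + 1) → ℂ) :
    (cyclicMatrix α β).map (↑) *ᵥ u =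
      fun i => -α i * u i + ↑(if i = 0 then -β (i - 1) else β (i - 1)) * u (i - 1) := by
  ext i
  simp only [mulVec, dotProduct, map_apply, cyclicMatrix_apply hn]
  simp [apply_ite ((↑) : ℝ → ℂ), add_mul, sum_add_distrib, ite_mul]

variable {α β : Fin (n + 1) → ℝ} {μ : ℂ}

noncomputable def cyclicEigenvector (α β : Fin (n + 1) → ℝ) (μ : ℂ) (i : Fin (n + 1)) : ℂ :=
  cyclicWeight (fun j => α j) (fun j => β j) μ i

theorem prod_univ_fin_eq_prod_range_natCast {M : Type*} [CommMonoid M] (f : Fin (n + 1) → M) :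
    ∏ i, f i = ∏ j ∈ range (n + 1), f j := by
  simpa using Fin.prod_univ_eq_prod_range (fun j => f j) (n + 1)

theorem cyclicMatrix_map_mulVec_cyclicEigenvector (hn : n ≠ 0) (hα : ∀ i, α i ≠ 0) (hμ : μ ≠ 0)
    (hμn : μ ^ (n + 1) * ∏ i, (α i : ℂ) = -∏ i, (β i : ℂ)) :
    (cyclicMatrix α β).map (↑) *ᵥ cyclicEigenvector α β μ =
      fun i => (μ - 1) * α i * cyclicEigenvector α β μ i := by
  have ha : ∀ j : ℕ, (α j : ℂ) ≠ 0 := fun j => Complex.ofReal_ne_zero.mpr (hα _)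
  rw [cyclicMatrix_map_mulVec hn]
  ext i
  suffices h : ↑(if i = 0 then -β (i - 1) else β (i - 1)) * cyclicEigenvector α β μ (i - 1) =
      μ * α i * cyclicEigenvector α β μ i by
    rw [h]; ring
  rcases eq_or_ne i 0 with rfl | hi
  · rw [prod_univ_fin_eq_prod_range_natCast, prod_univ_fin_eq_prod_range_natCast] at hμn
    have hlast : (0 - 1 : Fin (n + 1)) = Fin.last n := Fin.ext Fin.coe_neg_one
    have := cyclicWeight_wrap ha hμ hμn
    simp only [Fin.natCast_eq_last, Nat.cast_zero] at this
    simp [cyclicEigenvector, hlast, this]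
  · have hk : (i - 1).val + 1 = i.val := by
      rw [Fin.val_sub_one_of_ne_zero hi]
      exact Nat.sub_add_cancel (Nat.one_le_iff_ne_zero.mpr (Fin.val_ne_zero_iff.mpr hi))
    have hi' : i = ((i - 1).val + 1 : ℕ) := by rw [hk, Fin.cast_val_eq_self]
    have := cyclicWeight_succ ha hμ (b := fun j => (β j : ℂ)) (i - 1).val
    simp only [Fin.cast_val_eq_self, ← hi'] at this
    simp only [cyclicEigenvector, if_neg hi, ← hk, this]

theorem cyclicEigenvector_ne_zero (hα : ∀ i, α i ≠ 0) : cyclicEigenvector α β μ ≠ 0 :=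
  Function.ne_iff.mpr ⟨0, by simp [cyclicEigenvector, cyclicWeight, hα]⟩

end Cyclic

theorem exists_pow_eq_neg_re_eq {P : ℝ} (hP : 0 ≤ P) {N : ℕ} (hN : N ≠ 0) :
    ∃ μ : ℂ, μ ^ N = -P ∧ μ.re = P ^ (N⁻¹ : ℝ) * cos (π / N) := by
  refine ⟨(P ^ (N⁻¹ : ℝ) : ℝ) * Complex.exp ((π / N : ℝ) * Complex.I), ?_, ?_⟩
  · have hπ : (N : ℂ) * ((π / N : ℝ) * Complex.I) = π * Complex.I := by
      push_cast
      field_simp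
    rw [mul_pow, ← Complex.exp_nat_mul, hπ, Complex.exp_pi_mul_I, ← Complex.ofReal_pow,
      Real.rpow_inv_natCast_pow hP hN]
    ring
  · rw [Complex.re_ofReal_mul, Complex.exp_ofReal_mul_I_re]

theorem lt_one_div_pow_of_rpow_inv_mul_lt_one {P c : ℝ} (hP : 0 ≤ P) (hc : 0 < c) {N : ℕ}
    (hN : N ≠ 0) (h : P ^ (N⁻¹ : ℝ) * c < 1) : P < (1 / c) ^ N := by
  calc P = (P ^ (N⁻¹ : ℝ)) ^ N := (Real.rpow_inv_natCast_pow hP hN).symm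
    _ < (1 / c) ^ N :=
      pow_lt_pow_left₀ ((lt_div_iff₀ hc).mpr h) (Real.rpow_nonneg hP _) hN

theorem cos_pi_div_pos {N : ℕ} (hN : 2 < N) : 0 < cos (π / N) := by
  apply cos_pos_of_mem_Ioo
  constructor
  · have : 0 < π / N := by positivity
    linarith [pi_pos]
  · rw [div_lt_div_iff₀ (by positivity) two_pos]
    have : (2 : ℝ) < N := by exact_mod_cast hN
    nlinarith [pi_pos]

theorem stmt_3 (N : ℕ) (hN : 2 < N) (α β : Fin N → ℝ)
    (hα : ∀ i, 0 < α i) (hβ : ∀ i, 0 < β i)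
    (A : Matrix (Fin N) (Fin N) ℝ)
    (hA : ∀ i j : Fin N,
      A i j = if i = j then -α i
        else if i.val = j.val + 1 then β j
        else if i.val = 0 ∧ j.val = N - 1 then -(β ⟨N - 1, by omega⟩)
        else 0)
    (hD : ∃ D : Fin N → ℝ, (∀ i, 0 < D i) ∧
      (-(Matrix.diagonal D * A + Aᵀ * Matrix.diagonal D)).PosDef) :
    (∏ i, β i) / (∏ i, α i) < (1 / Real.cos (Real.pi / N)) ^ N := by
  obtain ⟨n, rfl⟩ : ∃ n, N = n + 1 := ⟨N - 1, by omega⟩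
  obtain rfl : A = cyclicMatrix α β := Matrix.ext hA
  obtain ⟨D, hDpos, hDA⟩ := hD
  have hα0 : ∀ i, α i ≠ 0 := fun i => (hα i).ne'
  set P := (∏ i, β i) / ∏ i, α i with hPdef
  have hP : 0 < P := div_pos (prod_pos fun i _ => hβ i) (prod_pos fun i _ => hα i)
  obtain ⟨μ, hμn, hμre⟩ := exists_pow_eq_neg_re_eq hP.le n.succ_ne_zero
  have hμ : μ ≠ 0 := by
    rintro rfl
    simp [hP.ne'] at hμn
  have hμn' : μ ^ (n + 1) * ∏ i, (α i : ℂ) = -∏ i, (β i : ℂ) := by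
    have : ∏ i, (α i : ℂ) ≠ 0 :=
      prod_ne_zero_iff.mpr fun i _ => Complex.ofReal_ne_zero.mpr (hα0 i)
    rw [hμn, hPdef]
    push_cast
    field_simp
  have hre := re_neg_of_diagonal_lyapunov (fun i => mul_pos (hDpos i) (hα i)) hDA
    (cyclicEigenvector_ne_zero hα0)
    (cyclicMatrix_map_mulVec_cyclicEigenvector (by omega) hα0 hμ hμn')
  rw [Complex.sub_re, Complex.one_re, hμre] at hre
  exact lt_one_div_pow_of_rpow_inv_mul_lt_one hP.le (cos_pi_div_pos hN) n.succ_ne_zero (by linarith)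
end

section
/- Let N > 2, ν₁,...,ν_N > 0, and ρ > cos(π/(N+1))^{N+1} / (ν₁⋯ν_N). Then the (N+1)×(N+1) matrix A with diagonal entries -ν₁,...,-ν_N, -1, subdiagonal entries all equal to 1, entry -1/ρ in position (1, N+1), and zeros elsewhere, is Lyapunov diagonally stable: there exists a diagonal matrix D with positive entries such that DA + AᵀD is negative definite. -/
/-!
Write `a`, `b` for the diagonal and feedback gains of the cycle and `c` for the `(n+1)`-st root
of the loop gain `∏ b_k / a_k`. Going once around the cycle, the recursion
`s_{k+1} b_k = c a_{k+1} s_k` returns to its starting value, so there are positive weights `s_k`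
with which `D_k = s_k² / a_k` turns `xᵀ D A x` into `c (∑ y_k y_{k+1} - y_0 y_n) - ‖y‖²`
for `y_k = s_k x_k`. The form `∑ y_k y_{k+1} - y_0 y_n` is the symmetric part of the negacyclic
shift, which the negacyclic DFT (evaluation at the roots `ω_j` of `z^{n+1} = -1`) diagonalises
with eigenvalues `Re ω_j ≤ cos(π/(n+1))`. The secant condition says exactly that
`c cos(π/(n+1)) < 1`.
-/

open Finset Matrix
open scoped Real

section Negacyclic

open Complex ComplexConjugate

noncomputable def negOneRoot (m j : ℕ) : ℂ := exp (((2 * j + 1) * π / m : ℝ) * I)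

namespace negOneRoot

variable {m : ℕ}

lemma eq_mul_pow (hm : m ≠ 0) (j : ℕ) :
    negOneRoot m j = exp (π * I / m) * exp (2 * π * I / m) ^ j := by
  rw [negOneRoot, ← exp_nat_mul, ← exp_add]
  congr 1
  push_cast
  field_simp
  ring

lemma pow_self (hm : m ≠ 0) (j : ℕ) : negOneRoot m j ^ m = -1 := by
  rw [eq_mul_pow hm, mul_pow, ← pow_mul, mul_comm j, pow_mul,
    (isPrimitiveRoot_exp m hm).pow_eq_one, one_pow, mul_one, ← exp_nat_mul,
    mul_div_cancel₀ _ (Nat.cast_ne_zero.2 hm), exp_pi_mul_I]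

lemma norm_eq_one (j : ℕ) : ‖negOneRoot m j‖ = 1 := norm_exp_ofReal_mul_I _

lemma sum_pow_eq_zero {s : ℕ} (hs₀ : s ≠ 0) (hs : s < m) :
    ∑ j ∈ range m, negOneRoot m j ^ s = 0 := by
  have hm : m ≠ 0 := by omega
  have hμ := isPrimitiveRoot_exp m hm
  simp_rw [eq_mul_pow hm, mul_pow, ← pow_mul, mul_comm _ s, pow_mul, ← mul_sum,
    geom_sum_eq (hμ.pow_ne_one_of_pos_of_lt hs₀ hs), ← pow_mul, mul_comm s, pow_mul,
    hμ.pow_eq_one, one_pow, sub_self, zero_div, mul_zero]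

lemma re_le_cos {j : ℕ} (hj : j < m) : (negOneRoot m j).re ≤ Real.cos (π / m) := by
  rw [negOneRoot, exp_ofReal_mul_I_re]
  have hm : (0 : ℝ) < m := by exact_mod_cast (show 0 < m by omega)
  have hθ : 0 ≤ π / m := by positivity
  have hlow : π / m ≤ (2 * j + 1) * π / m := by
    rw [mul_div_assoc]
    nlinarith [Real.pi_pos]
  have hhigh : (2 * j + 1) * π / m ≤ 2 * π - π / m := by
    have : (j : ℝ) + 1 ≤ m := by exact_mod_cast hj
    rw [le_sub_iff_add_le, ← add_div, div_le_iff₀ hm]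
    nlinarith [Real.pi_pos]
  rcases le_total ((2 * j + 1) * π / m) π with h | h
  · exact Real.cos_le_cos_of_nonneg_of_le_pi hθ h hlow
  · rw [← Real.cos_two_pi_sub]
    exact Real.cos_le_cos_of_nonneg_of_le_pi hθ (by linarith) (by linarith)

lemma sum_pow_mul_conj_pow {k l : ℕ} (hk : k < m) (hl : l < m) :
    ∑ j ∈ range m, negOneRoot m j ^ k * conj (negOneRoot m j ^ l) =
      if k = l then (m : ℂ) else 0 := by
  wlog hlk : l ≤ k generalizing k l
  · calc _ = conj (∑ j ∈ range m, negOneRoot m j ^ l * conj (negOneRoot m j ^ k)) := by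
          rw [map_sum]
          exact sum_congr rfl fun j _ => by rw [map_mul, conj_conj, mul_comm]
      _ = _ := by
          rw [this hl hk (by omega)]
          by_cases hkl : k = l
          · simp [hkl]
          · simp [hkl, Ne.symm hkl]
  have hpow : ∀ j,
      negOneRoot m j ^ k * conj (negOneRoot m j ^ l) = negOneRoot m j ^ (k - l) := by
    intro j
    rw [← Nat.sub_add_cancel hlk, pow_add, mul_assoc, mul_conj', norm_pow, norm_eq_one,
      Nat.add_sub_cancel]
    simp
  simp_rw [hpow]
  split_ifs with hkl
  · simp [hkl]
  · exact sum_pow_eq_zero (by omega) (by omega)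

end negOneRoot

noncomputable def negacyclicDFT (m : ℕ) (y : ℕ → ℝ) (j : ℕ) : ℂ :=
  ∑ k ∈ range m, (y k : ℂ) * negOneRoot m j ^ k

def negacyclicShift (n : ℕ) (y : ℕ → ℝ) (k : ℕ) : ℝ := if k = 0 then -y n else y (k - 1)

lemma negacyclicDFT_mul_conj (m : ℕ) (u w : ℕ → ℝ) (j : ℕ) :
    negacyclicDFT m u j * conj (negacyclicDFT m w j) =
      ∑ k ∈ range m, ∑ l ∈ range m,
        (u k * w l : ℂ) * (negOneRoot m j ^ k * conj (negOneRoot m j ^ l)) := by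
  rw [negacyclicDFT, negacyclicDFT, map_sum, sum_mul_sum]
  exact sum_congr rfl fun k _ => sum_congr rfl fun l _ => by rw [map_mul, conj_ofReal]; ring

lemma sum_negacyclicDFT_mul_conj (m : ℕ) (u w : ℕ → ℝ) :
    ∑ j ∈ range m, negacyclicDFT m u j * conj (negacyclicDFT m w j) =
      ((m * ∑ k ∈ range m, u k * w k : ℝ) : ℂ) := by
  simp_rw [negacyclicDFT_mul_conj]
  rw [sum_comm]
  push_cast
  rw [mul_sum]
  refine sum_congr rfl fun k hk => ?_
  rw [sum_comm]
  simp_rw [← mul_sum]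
  rw [sum_congr rfl fun l hl => by
    rw [negOneRoot.sum_pow_mul_conj_pow (mem_range.1 hk) (mem_range.1 hl)]]
  simp only [mul_ite, mul_zero, sum_ite_eq, if_pos hk]
  ring

lemma negOneRoot_mul_negacyclicDFT (n : ℕ) (y : ℕ → ℝ) (j : ℕ) :
    negOneRoot (n + 1) j * negacyclicDFT (n + 1) y j =
      negacyclicDFT (n + 1) (negacyclicShift n y) j := by
  rw [negacyclicDFT, negacyclicDFT, sum_range_succ, sum_range_succ', mul_add, mul_sum]
  simp only [negacyclicShift, if_true, Nat.add_eq_zero_iff, one_ne_zero, and_false, if_false,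
    Nat.add_sub_cancel, pow_zero, mul_one, ofReal_neg]
  rw [mul_left_comm, ← pow_succ', negOneRoot.pow_self n.succ_ne_zero]
  congr 1
  · exact sum_congr rfl fun k _ => by ring
  · ring

theorem negacyclic_form_le (n : ℕ) (y : ℕ → ℝ) :
    ∑ k ∈ range n, y k * y (k + 1) - y 0 * y n ≤
      Real.cos (π / (n + 1)) * ∑ k ∈ range (n + 1), y k ^ 2 := by
  set F := negacyclicDFT (n + 1) y
  have hnorm : ∑ j ∈ range (n + 1), ‖F j‖ ^ 2 = (n + 1) * ∑ k ∈ range (n + 1), y k ^ 2 := by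
    have h := sum_negacyclicDFT_mul_conj (n + 1) y y
    simp_rw [mul_conj', ← sq] at h
    exact_mod_cast h
  have hshift : ∑ j ∈ range (n + 1), (negOneRoot (n + 1) j).re * ‖F j‖ ^ 2 =
      (n + 1) * (∑ k ∈ range n, y k * y (k + 1) - y 0 * y n) := by
    have h := congrArg re (sum_negacyclicDFT_mul_conj (n + 1) (negacyclicShift n y) y)
    simp_rw [← negOneRoot_mul_negacyclicDFT, mul_assoc, mul_conj', re_sum, ← ofReal_pow,
      re_mul_ofReal, ofReal_re] at h
    rw [h, sum_range_succ']
    simp only [negacyclicShift, Nat.add_eq_zero_iff, one_ne_zero, and_false, if_false, if_true,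
      Nat.add_sub_cancel]
    push_cast
    ring
  have hle : ∑ j ∈ range (n + 1), (negOneRoot (n + 1) j).re * ‖F j‖ ^ 2 ≤
      ∑ j ∈ range (n + 1), Real.cos (π / (n + 1)) * ‖F j‖ ^ 2 :=
    sum_le_sum fun j hj => mul_le_mul_of_nonneg_right
      (by exact_mod_cast negOneRoot.re_le_cos (mem_range.1 hj)) (sq_nonneg _)
  rw [← mul_sum, hshift, hnorm, mul_left_comm] at hle
  exact le_of_mul_le_mul_left hle (by positivity)

end Negacyclic

lemma posDef_neg_lyapunov_of_forall_sum_neg {ι : Type*} [Fintype ι] [DecidableEq ι]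
    (A : Matrix ι ι ℝ) (D : ι → ℝ) (h : ∀ x ≠ 0, ∑ i, D i * x i * (A *ᵥ x) i < 0) :
    (-(diagonal D * A + Aᵀ * diagonal D)).PosDef := by
  rw [posDef_iff_dotProduct_mulVec]
  refine ⟨by simp [IsHermitian, transpose_add, transpose_mul, add_comm], fun x hx => ?_⟩
  simp only [star_trivial, neg_mulVec, dotProduct_neg, add_mulVec, ← mulVec_mulVec,
    dotProduct_add]
  rw [dotProduct_mulVec x Aᵀ, vecMul_transpose]
  simp only [dotProduct, mulVec_diagonal, ← sum_add_distrib]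
  have hsym : ∑ i, (x i * (D i * (A *ᵥ x) i) + (A *ᵥ x) i * (D i * x i)) =
      2 * ∑ i, D i * x i * (A *ᵥ x) i := by
    rw [mul_sum]
    exact sum_congr rfl fun i _ => by ring
  linarith [h x hx]

lemma exists_pos_pow_eq_mul_lt_one {P t : ℝ} (n : ℕ) (hP : 0 < P) (h : P * t ^ (n + 1) < 1) :
    ∃ c, 0 < c ∧ c ^ (n + 1) = P ∧ c * t < 1 := by
  refine ⟨P ^ ((n + 1 : ℕ)⁻¹ : ℝ), by positivity, Real.rpow_inv_natCast_pow hP.le n.succ_ne_zero,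
    lt_of_pow_lt_pow_left₀ (n + 1) zero_le_one ?_⟩
  rwa [mul_pow, Real.rpow_inv_natCast_pow hP.le n.succ_ne_zero, one_pow]

def cyclicFeedbackMatrix (n : ℕ) (a b : ℕ → ℝ) : Matrix (Fin (n + 1)) (Fin (n + 1)) ℝ :=
  of fun i j => if i = j then -a i else if i.val = j.val + 1 then b j
    else if i.val = 0 ∧ j.val = n then -b j else 0

variable {n : ℕ} {a b : ℕ → ℝ}

lemma cyclicFeedbackMatrix_apply (i j : Fin (n + 1)) :
    cyclicFeedbackMatrix n a b i j = if i = j then -a i else if i.val = j.val + 1 then b j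
      else if i.val = 0 ∧ j.val = n then -b j else 0 := rfl

lemma cyclicFeedbackMatrix_form_eq (hn : n ≠ 0) (d X : ℕ → ℝ) :
    ∑ i : Fin (n + 1), d i * X i * (cyclicFeedbackMatrix n a b *ᵥ fun j => X j) i =
      d 0 * X 0 * (-a 0 * X 0 - b n * X n) +
        ∑ k ∈ range n, d (k + 1) * X (k + 1) * (b k * X k - a (k + 1) * X (k + 1)) := by
  have hrow₀ : (cyclicFeedbackMatrix n a b *ᵥ fun j => X j) 0 = -a 0 * X 0 - b n * X n := by
    rw [mulVec, dotProduct,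
      Fintype.sum_eq_add 0 (Fin.last n) (by simp [Fin.ext_iff, hn, eq_comm])]
    · simp [cyclicFeedbackMatrix_apply, Fin.ext_iff, hn, eq_comm, sub_eq_add_neg]
    · rintro j ⟨hj₀, hjn⟩
      simp only [cyclicFeedbackMatrix_apply, Ne, Fin.ext_iff, Fin.val_zero, Fin.val_last]
        at hj₀ hjn ⊢
      split_ifs <;> first | omega | simp_all
  have hrow (k : Fin n) : (cyclicFeedbackMatrix n a b *ᵥ fun j => X j) k.succ =
      b k * X k - a (k + 1) * X (k + 1) := by
    rw [mulVec, dotProduct, Fintype.sum_eq_add k.castSucc k.succ (by simp [Fin.ext_iff])]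
    · simp [cyclicFeedbackMatrix_apply, Fin.ext_iff, sub_eq_add_neg]
    · rintro j ⟨hjk, hjk'⟩
      simp only [cyclicFeedbackMatrix_apply, Ne, Fin.ext_iff, Fin.val_succ, Fin.val_castSucc]
        at hjk hjk' ⊢
      split_ifs <;> first | omega | simp_all
  rw [Fin.sum_univ_succ, hrow₀, ← Fin.sum_univ_eq_sum_range]
  simp only [hrow, Fin.val_zero, Fin.val_succ]

lemma exists_cyclic_balance {c : ℝ} (hc : 0 < c) (ha : ∀ k ≤ n, 0 < a k)
    (hb : ∀ k ≤ n, 0 < b k) (hcprod : c ^ (n + 1) = ∏ k ∈ range (n + 1), b k / a k) :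
    ∃ s : ℕ → ℝ, (∀ k ≤ n, 0 < s k) ∧ (∀ k < n, s (k + 1) * b k = c * a (k + 1) * s k) ∧
      b n * s 0 = c * a 0 * s n := by
  refine ⟨fun k => ∏ i ∈ range k, c * a (i + 1) / b i, fun k hk => ?_, fun k hk => ?_, ?_⟩
  · refine prod_pos fun i hi => ?_
    have := mem_range.1 hi
    exact div_pos (mul_pos hc (ha _ (by omega))) (hb _ (by omega))
  · dsimp only
    rw [prod_range_succ, mul_assoc, div_mul_cancel₀ _ (hb k (by omega)).ne']
    ring
  · have hb₀ : ∏ i ∈ range n, b i ≠ 0 :=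
      prod_ne_zero_iff.2 fun i hi => (hb i (by have := mem_range.1 hi; omega)).ne'
    have ha₀ : ∏ i ∈ range n, a (i + 1) ≠ 0 :=
      prod_ne_zero_iff.2 fun i hi => (ha (i + 1) (by have := mem_range.1 hi; omega)).ne'
    have := (ha 0 (by omega)).ne'
    rw [prod_div_distrib, prod_range_succ b, prod_range_succ' a] at hcprod
    simp only [prod_range_zero, prod_div_distrib, prod_mul_distrib, prod_const, card_range]
    field_simp at hcprod ⊢
    rw [← hcprod]
    ring

theorem exists_diagonal_lyapunov_of_secant (hn : n ≠ 0) (ha : ∀ k ≤ n, 0 < a k)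
    (hb : ∀ k ≤ n, 0 < b k)
    (hsec : (∏ k ∈ range (n + 1), b k / a k) * Real.cos (π / (n + 1)) ^ (n + 1) < 1) :
    ∃ D : Fin (n + 1) → ℝ, (∀ i, 0 < D i) ∧
      (-(diagonal D * cyclicFeedbackMatrix n a b +
        (cyclicFeedbackMatrix n a b)ᵀ * diagonal D)).PosDef := by
  have hP : 0 < ∏ k ∈ range (n + 1), b k / a k := prod_pos fun k hk =>
    have := mem_range.1 hk
    div_pos (hb k (by omega)) (ha k (by omega))
  obtain ⟨c, hc, hcP, hccos⟩ := exists_pos_pow_eq_mul_lt_one n hP hsec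
  obtain ⟨s, hs, hsucc, hwrap⟩ := exists_cyclic_balance hc ha hb hcP
  refine ⟨fun i => s i ^ 2 / a i, fun i => ?_,
    posDef_neg_lyapunov_of_forall_sum_neg _ _ fun x hx => ?_⟩
  · have := i.is_lt
    exact div_pos (pow_pos (hs i (by omega)) 2) (ha i (by omega))
  set X : ℕ → ℝ := fun k => if h : k < n + 1 then x ⟨k, h⟩ else 0
  have hxX : x = fun i : Fin (n + 1) => X i :=
    funext fun i => by simp only [X, dif_pos i.is_lt]
  rw [hxX, cyclicFeedbackMatrix_form_eq hn (fun k => s k ^ 2 / a k)]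
  set y := fun k => s k * X k
  have hwrap_term : s 0 ^ 2 / a 0 * X 0 * (-a 0 * X 0 - b n * X n) =
      -y 0 ^ 2 - c * (y 0 * y n) := by
    have := (ha 0 (by omega)).ne'
    field_simp
    linear_combination (-s 0 * X 0 * X n) * hwrap
  have hsucc_term : ∀ k ∈ range n,
      s (k + 1) ^ 2 / a (k + 1) * X (k + 1) * (b k * X k - a (k + 1) * X (k + 1)) =
        c * (y k * y (k + 1)) - y (k + 1) ^ 2 := by
    intro k hk
    have := (ha (k + 1) (by have := mem_range.1 hk; omega)).ne'
    field_simp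
    linear_combination (s (k + 1) * X k * X (k + 1)) * hsucc k (mem_range.1 hk)
  have hy : 0 < ∑ k ∈ range (n + 1), y k ^ 2 := by
    obtain ⟨i, hi⟩ := Function.ne_iff.1 hx
    have hXi : X i ≠ 0 := by rw [show X i = x i from dif_pos i.is_lt]; exact hi
    exact sum_pos' (fun k _ => sq_nonneg _) ⟨i, mem_range.2 i.is_lt,
      sq_pos_of_ne_zero (mul_ne_zero (hs i (by omega)).ne' hXi)⟩
  have hform := negacyclic_form_le n y
  rw [hwrap_term, sum_congr rfl hsucc_term, sum_sub_distrib, ← mul_sum]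
  rw [sum_range_succ'] at hy hform
  nlinarith

theorem stmt_5 (N : ℕ) (hN : 2 < N) (ν : Fin N → ℝ) (hν : ∀ i, 0 < ν i)
    (ρ : ℝ) (hρ : Real.cos (Real.pi / (N + 1)) ^ (N + 1) / (∏ i, ν i) < ρ)
    (A : Matrix (Fin (N + 1)) (Fin (N + 1)) ℝ)
    (hA : ∀ i j : Fin (N + 1),
      A i j = if h : i = j then (if hi : i.val < N then -ν ⟨i.val, hi⟩ else -1)
        else if i.val = j.val + 1 then 1
        else if i.val = 0 ∧ j.val = N then -(1 / ρ)
        else 0) :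
    ∃ D : Fin (N + 1) → ℝ, (∀ i, 0 < D i) ∧
      (-(Matrix.diagonal D * A + Aᵀ * Matrix.diagonal D)).PosDef := by
  have hcos : 0 ≤ Real.cos (π / (N + 1)) := Real.cos_nonneg_of_neg_pi_div_two_le_of_le
    (by linarith [Real.pi_pos, show 0 < π / (N + 1) by positivity])
    (div_le_div_of_nonneg_left Real.pi_pos.le two_pos (by norm_cast; omega))
  have hP : 0 < ∏ i, ν i := prod_pos fun i _ => hν i
  have hρ₀ : 0 < ρ := lt_of_le_of_lt (by positivity) hρ
  obtain rfl : A = cyclicFeedbackMatrix N (fun k => if h : k < N then ν ⟨k, h⟩ else 1)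
      (fun k => if k < N then 1 else 1 / ρ) := by
    ext i j
    have := i.is_lt
    have := j.is_lt
    rw [hA, cyclicFeedbackMatrix_apply]
    split_ifs <;> first | rfl | omega
  refine exists_diagonal_lyapunov_of_secant (by omega) (fun k _ => ?_) (fun k _ => ?_) ?_
  · split_ifs
    exacts [hν _, one_pos]
  · split_ifs
    exacts [one_pos, by positivity]
  · rw [prod_range_succ, ← Fin.prod_univ_eq_prod_range]
    simp only [Fin.is_lt, ↓reduceIte, ↓reduceDIte, Fin.eta, one_div, prod_inv_distrib,
      lt_self_iff_false, div_one]
    rw [div_lt_iff₀ hP] at hρ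
    field_simp
    linarith
end
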